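/- arXiv:2410.11662 — 3 statements merged into one kernel-verified Lean document; each statement's English description precedes it below -/
import Mathlib

section
/- Let X and Y be metric spaces, H a complex Hilbert space, g : X → Y a map, δ > 0, and R, W ≥ 0 such that d(g(x), g(x')) ≤ W whenever d(x,x') ≤ R. Let V : ℓ²(X;H) → ℓ²(Y;H) be a bounded operator whose entries satisfy V_{y,x} = 0 whenever d(g(x), y) ≥ δ, and let T be a bounded operator on ℓ²(X;H) with propagation at most R. Then V∘T∘V* has propagation at most W + 2δ; that is, (V∘T∘V*)_{y,y'} = 0 whenever d(y,y') > W + 2δ, where V* is the Hilbert-space adjoint of V (whose entries satisfy (V*)_{x,y} = (V_{y,x})*). -/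
/-- `ℓ²(X; H)`: square-summable functions from `X` to `H`. -/
noncomputable abbrev ellTwo (X : Type) (H : Type) [NormedAddCommGroup H] :=
  lp (fun _ : X => H) 2

/-- A bounded operator on `ℓ²(X;H)` has propagation at most `r` if its matrix entries
`T_{x,y} : v ↦ (T (δ_y v)) x` vanish whenever `dist x y > r`. -/
def HasPropagationAtMost {X : Type} [MetricSpace X] [DecidableEq X]
    {H : Type} [NormedAddCommGroup H] [InnerProductSpace ℂ H]
    (T : ellTwo X H →L[ℂ] ellTwo X H) (r : ℝ) : Prop :=
  ∀ x y : X, r < dist x y → ∀ v : H, T (lp.single 2 y v) x = 0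

/-!
The vector `V* δ_{y'} v` is supported on `{x | d(g x, y') < δ}`, since its `x`-entry is
`(V_{y',x})* v`. Applying `T` moves this support by at most `R`, so by the hypothesis on `g`
into points `x'` with `d(g x', y') < W + δ`; then `V_{y,x'} = 0` as soon as `d(y, y') > W + 2δ`.
-/

open ENNReal

namespace lp

theorem apply_eq_zero_of_entries_eq_zero {𝕜 α β : Type*} [NormedRing 𝕜]
    {E : α → Type*} {F : β → Type*} [∀ a, NormedAddCommGroup (E a)]
    [∀ b, NormedAddCommGroup (F b)] [∀ a, Module 𝕜 (E a)] [∀ b, Module 𝕜 (F b)]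
    [∀ a, IsBoundedSMul 𝕜 (E a)] [∀ b, IsBoundedSMul 𝕜 (F b)] [DecidableEq α]
    {p q : ℝ≥0∞} [Fact (1 ≤ p)] [Fact (1 ≤ q)] (hp : p ≠ ∞)
    (A : lp E p →L[𝕜] lp F q) (S : Set α) (b : β)
    (hA : ∀ a ∈ S, ∀ v, A (lp.single p a v) b = 0)
    (f : lp E p) (hf : ∀ a ∉ S, f a = 0) : A f b = 0 := by
  have hsum : HasSum (fun a => A (lp.single p a (f a)) b) (A f b) :=
    (lp.hasSum_single hp f).map ((lp.evalCLM 𝕜 F q b).comp A) (by fun_prop)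
  have hterm : ∀ a, A (lp.single p a (f a)) b = 0 := fun a => by
    by_cases ha : a ∈ S
    · exact hA a ha _
    · rw [hf a ha, lp.single_zero, map_zero, lp.coeFn_zero, Pi.zero_apply]
  simp only [hterm] at hsum
  exact hsum.unique hasSum_zero

theorem adjoint_single_apply_eq_zero {𝕜 ι κ : Type*} [RCLike 𝕜]
    {G : ι → Type*} {G' : κ → Type*} [∀ i, NormedAddCommGroup (G i)]
    [∀ k, NormedAddCommGroup (G' k)] [∀ i, InnerProductSpace 𝕜 (G i)]
    [∀ k, InnerProductSpace 𝕜 (G' k)] [∀ i, CompleteSpace (G i)] [∀ k, CompleteSpace (G' k)]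
    [DecidableEq ι] [DecidableEq κ] (V : lp G 2 →L[𝕜] lp G' 2) (i : ι) (k : κ)
    (hV : ∀ w, V (lp.single 2 i w) k = 0) (v : G' k) :
    ContinuousLinearMap.adjoint V (lp.single 2 k v) i = 0 := by
  set f := ContinuousLinearMap.adjoint V (lp.single 2 k v)
  refine (inner_self_eq_zero (𝕜 := 𝕜)).mp ?_
  calc inner 𝕜 (f i) (f i)
      = inner 𝕜 (lp.single 2 i (f i)) f := (lp.inner_single_left i (f i) f).symm
    _ = inner 𝕜 (V (lp.single 2 i (f i))) (lp.single 2 k v) :=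
        ContinuousLinearMap.adjoint_inner_right V _ _
    _ = 0 := by rw [lp.inner_single_right, hV, inner_zero_left]

end lp

theorem propagation_conjugation_general {X Y : Type} [MetricSpace X] [MetricSpace Y]
    [DecidableEq X] [DecidableEq Y]
    {H : Type} [NormedAddCommGroup H] [InnerProductSpace ℂ H] [CompleteSpace H]
    (g : X → Y) (δ R W : ℝ)
    (hg : ∀ x x' : X, dist x x' ≤ R → dist (g x) (g x') ≤ W)
    (V : ellTwo X H →L[ℂ] ellTwo Y H)
    (hV : ∀ (x : X) (y : Y), δ ≤ dist (g x) y → ∀ v : H, V (lp.single 2 x v) y = 0)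
    (T : ellTwo X H →L[ℂ] ellTwo X H) (hT : HasPropagationAtMost T R) :
    ∀ y y' : Y, W + 2 * δ < dist y y' → ∀ v : H,
      (V.comp (T.comp (ContinuousLinearMap.adjoint V))) (lp.single 2 y' v) y = 0 := by
  intro y y' hyy' v
  have hVT : ∀ x ∈ {x | dist (g x) y' < δ}, ∀ w, (V.comp T) (lp.single 2 x w) y = 0 := by
    intro x (hx : dist (g x) y' < δ) w
    refine lp.apply_eq_zero_of_entries_eq_zero ofNat_ne_top V (Metric.closedBall x R) y
      (fun x' hx' u => hV x' y ?_ u) _ (fun x' hx' => hT x' x ?_ w)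
    · have hgx := hg x x' (by rwa [Metric.mem_closedBall, dist_comm] at hx')
      linarith [dist_triangle4 y (g x') (g x) y', dist_comm (g x') (g x), dist_comm (g x') y]
    · simpa using hx'
  exact lp.apply_eq_zero_of_entries_eq_zero ofNat_ne_top (V.comp T) _ y hVT _
    fun x hx => lp.adjoint_single_apply_eq_zero V x y' (hV x y' (not_lt.mp hx)) v

/-- If the entries of `V` are supported `δ`-close to the graph of `g`, the distortion of
`g` at scale `R` is at most `W`, and `T` has propagation at most `R`, then `V ∘ T ∘ V*`
has propagation at most `W + 2δ`. -/
theorem propagation_conjugation {X Y : Type} [MetricSpace X] [MetricSpace Y]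
    [DecidableEq X] [DecidableEq Y]
    {H : Type} [NormedAddCommGroup H] [InnerProductSpace ℂ H] [CompleteSpace H]
    (g : X → Y) (δ R W : ℝ) (hδ : 0 < δ) (hR : 0 ≤ R) (hW : 0 ≤ W)
    (hg : ∀ x x' : X, dist x x' ≤ R → dist (g x) (g x') ≤ W)
    (V : ellTwo X H →L[ℂ] ellTwo Y H)
    (hV : ∀ (x : X) (y : Y), δ ≤ dist (g x) y → ∀ v : H, V (lp.single 2 x v) y = 0)
    (T : ellTwo X H →L[ℂ] ellTwo X H) (hT : HasPropagationAtMost T R) :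
    ∀ y y' : Y, W + 2 * δ < dist y y' → ∀ v : H,
      (V.comp (T.comp (ContinuousLinearMap.adjoint V))) (lp.single 2 y' v) y = 0 :=
  propagation_conjugation_general g δ R W hg V hV T hT
end

section
/- Let X and Y be locally finite metric spaces, H an infinite-dimensional separable complex Hilbert space, g : X → Y a coarse map, δ > 0, and V : ℓ²(X;H) → ℓ²(Y;H) an isometry (i.e., V*∘V = 1) whose entries satisfy V_{y,x} = 0 whenever d(g(x), y) ≥ δ. Then the map ad_g : T ↦ V∘T∘V* sends the Roe algebra C*(X) into the Roe algebra C*(Y), and its restriction to C*(X) is a *-homomorphism: it is linear, multiplicative, and adjoint-preserving. -/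
/-- All matrix entries of `T` are compact operators on `H`. -/
def HasCompactEntries {X : Type} [MetricSpace X] [DecidableEq X]
    {H : Type} [NormedAddCommGroup H] [InnerProductSpace ℂ H]
    (T : ellTwo X H →L[ℂ] ellTwo X H) : Prop :=
  ∀ x y : X, IsCompactOperator (fun v : H => T (lp.single 2 y v) x)

/-- The Roe algebra `C*(X)`: the norm closure of the set of operators having finite
propagation and compact entries. -/
def RoeAlgebra (X : Type) [MetricSpace X] [DecidableEq X]
    (H : Type) [NormedAddCommGroup H] [InnerProductSpace ℂ H] :
    Set (ellTwo X H →L[ℂ] ellTwo X H) :=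
  closure {T | (∃ r > (0 : ℝ), HasPropagationAtMost T r) ∧ HasCompactEntries T}

/-- A coarse map between metric spaces: preimages of bounded sets are bounded and
the map is uniformly expansive. -/
def CoarseMap {X Y : Type} [MetricSpace X] [MetricSpace Y] (g : X → Y) : Prop :=
  (∀ B : Set Y, Bornology.IsBounded B → Bornology.IsBounded (g ⁻¹' B)) ∧
  (∀ R > (0 : ℝ), ∃ S > (0 : ℝ), ∀ x x' : X, dist x x' ≤ R → dist (g x) (g x') ≤ S)

/-!
Let `T` have propagation `r` and compact entries. The `(y, y')` entry of `V T V*` is a finite sum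
of products `V_{y,x} T_{x,x'} (V*)_{x',y'}`: `(V*)_{x',y'} = (V_{y',x'})*` vanishes unless `x'` lies
in the finite set `g⁻¹(B(y', δ))`, and `T_{x,x'}` vanishes unless `x` lies in the finite ball
`B̄(x', r)`. Hence these entries are compact, and a nonzero term forces `d(y, y') < S + 2δ`, where
`S` bounds the expansion of `g` at scale `r`. So conjugation maps generators of `C*(X)` to
generators of `C*(Y)`, and by continuity the closures into each other. The algebraic identities
are formal; only multiplicativity uses `V* V = 1`.
-/

open ContinuousLinearMap (adjoint)

theorem lp.sum_single_eq_self {α : Type*} [DecidableEq α] {E : α → Type*}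
    [∀ i, NormedAddCommGroup (E i)] {p : ENNReal} (f : lp E p) (s : Finset α)
    (hf : ∀ i ∉ s, f i = 0) :
    ∑ i ∈ s, lp.single p i (f i) = f := by
  ext j
  rw [lp.coeFn_sum, Finset.sum_apply]
  simp only [lp.coeFn_single, Finset.sum_pi_single]
  split_ifs with hj
  · rfl
  · exact (hf j hj).symm

section MatrixEntry

variable {Z W U : Type} {H : Type} [NormedAddCommGroup H]

noncomputable def matrixEntry [DecidableEq Z] [NormedSpace ℂ H]
    (T : ellTwo Z H →L[ℂ] ellTwo W H) (w : W) (z : Z) : H →L[ℂ] H :=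
  (lp.evalCLM ℂ _ 2 w).comp (T.comp (lp.singleContinuousLinearMap ℂ _ 2 z))

@[simp]
theorem matrixEntry_apply [DecidableEq Z] [NormedSpace ℂ H] (T : ellTwo Z H →L[ℂ] ellTwo W H)
    (w : W) (z : Z) (v : H) : matrixEntry T w z v = T (lp.single 2 z v) w :=
  rfl

theorem matrixEntry_comp [DecidableEq Z] [DecidableEq W] [NormedSpace ℂ H]
    (A : ellTwo W H →L[ℂ] ellTwo U H) (B : ellTwo Z H →L[ℂ] ellTwo W H) (u : U) (z : Z)
    (s : Finset W) (hB : ∀ w ∉ s, matrixEntry B w z = 0) :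
    matrixEntry (A.comp B) u z = ∑ w ∈ s, (matrixEntry A u w).comp (matrixEntry B w z) := by
  ext v
  have hcol : ∑ w ∈ s, lp.single 2 w (B (lp.single 2 z v) w) = B (lp.single 2 z v) :=
    lp.sum_single_eq_self _ s fun w hw => by simpa using congr($(hB w hw) v)
  rw [sum_apply, matrixEntry_apply, ContinuousLinearMap.comp_apply, ← hcol,
    map_sum, lp.coeFn_sum, Finset.sum_apply]
  rfl

open scoped InnerProductSpace in
theorem matrixEntry_adjoint [DecidableEq Z] [DecidableEq W] [InnerProductSpace ℂ H]
    [CompleteSpace H] (V : ellTwo Z H →L[ℂ] ellTwo W H) (z : Z) (w : W) :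
    matrixEntry (adjoint V) z w = adjoint (matrixEntry V w z) := by
  refine (ContinuousLinearMap.eq_adjoint_iff _ _).2 fun v u => ?_
  rw [matrixEntry_apply, matrixEntry_apply, ← lp.inner_single_right,
    ContinuousLinearMap.adjoint_inner_left, lp.inner_single_left]

end MatrixEntry

section Conjugation

variable {X Y : Type} [MetricSpace X] [MetricSpace Y] [DecidableEq X] [DecidableEq Y]
  {H : Type} [NormedAddCommGroup H] [InnerProductSpace ℂ H] [CompleteSpace H]
  {g : X → Y} {δ : ℝ} {V : ellTwo X H →L[ℂ] ellTwo Y H}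

theorem matrixEntry_conj_eq_sum {T : ellTwo X H →L[ℂ] ellTwo X H} {r : ℝ}
    (hT : HasPropagationAtMost T r)
    (hV : ∀ (x : X) (y : Y), δ ≤ dist (g x) y → matrixEntry V y x = 0) (y y' : Y)
    (hball : (g ⁻¹' Metric.ball y' δ).Finite)
    (hcball : ∀ x' : X, (Metric.closedBall x' r).Finite) :
    matrixEntry (V.comp (T.comp (adjoint V))) y y' =
      ∑ x' ∈ hball.toFinset, ∑ x ∈ (hcball x').toFinset,
        (matrixEntry V y x).comp ((matrixEntry T x x').comp (matrixEntry (adjoint V) x' y')) := by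
  rw [← ContinuousLinearMap.comp_assoc, matrixEntry_comp _ _ _ _ hball.toFinset]
  · refine Finset.sum_congr rfl fun x' _ => ?_
    rw [matrixEntry_comp _ _ _ _ (hcball x').toFinset, ContinuousLinearMap.finsetSum_comp]
    · simp only [ContinuousLinearMap.comp_assoc]
    · intro x hx
      ext v
      simpa using hT x x' (by simpa using hx) v
  · intro x' hx'
    rw [matrixEntry_adjoint, hV x' y' (by simpa using hx'), map_zero]

theorem hasPropagationAtMost_conj {T : ellTwo X H →L[ℂ] ellTwo X H} {r S : ℝ}
    (hT : HasPropagationAtMost T r)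
    (hV : ∀ (x : X) (y : Y), δ ≤ dist (g x) y → matrixEntry V y x = 0)
    (hball : ∀ y' : Y, (g ⁻¹' Metric.ball y' δ).Finite)
    (hcball : ∀ x' : X, (Metric.closedBall x' r).Finite)
    (hgS : ∀ x x' : X, dist x x' ≤ r → dist (g x) (g x') ≤ S) :
    HasPropagationAtMost (V.comp (T.comp (adjoint V))) (S + 2 * δ) := by
  intro y y' hyy' v
  suffices matrixEntry (V.comp (T.comp (adjoint V))) y y' = 0 by simpa using congr($this v)
  rw [matrixEntry_conj_eq_sum hT hV y y' (hball y') hcball]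
  refine Finset.sum_eq_zero fun x' hx' => Finset.sum_eq_zero fun x hx => ?_
  rw [Set.Finite.mem_toFinset, Set.mem_preimage, Metric.mem_ball] at hx'
  rw [Set.Finite.mem_toFinset, Metric.mem_closedBall] at hx
  rw [hV x y ?_, ContinuousLinearMap.zero_comp]
  by_contra! hxy
  linarith [dist_triangle4 y (g x) (g x') y', dist_comm y (g x), hgS x x' hx]

theorem hasCompactEntries_conj {T : ellTwo X H →L[ℂ] ellTwo X H} {r : ℝ}
    (hT : HasPropagationAtMost T r) (hTc : HasCompactEntries T)
    (hV : ∀ (x : X) (y : Y), δ ≤ dist (g x) y → matrixEntry V y x = 0)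
    (hball : ∀ y' : Y, (g ⁻¹' Metric.ball y' δ).Finite)
    (hcball : ∀ x' : X, (Metric.closedBall x' r).Finite) :
    HasCompactEntries (V.comp (T.comp (adjoint V))) := by
  intro y y'
  change matrixEntry (V.comp (T.comp (adjoint V))) y y' ∈ compactOperator (RingHom.id ℂ) H H
  rw [matrixEntry_conj_eq_sum hT hV y y' (hball y') hcball]
  exact Submodule.sum_mem _ fun x' _ => Submodule.sum_mem _ fun x _ =>
    ((hTc x x').comp_clm (matrixEntry (adjoint V) x' y')).clm_comp (matrixEntry V y x)

theorem conj_mem_roeAlgebra (hLF : ∀ B : Set X, Bornology.IsBounded B → B.Finite)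
    (hg : CoarseMap g) (hδ : 0 < δ)
    (hV : ∀ (x : X) (y : Y), δ ≤ dist (g x) y → matrixEntry V y x = 0)
    {T : ellTwo X H →L[ℂ] ellTwo X H} (hT : T ∈ RoeAlgebra X H) :
    V.comp (T.comp (adjoint V)) ∈ RoeAlgebra Y H := by
  refine map_mem_closure (f := fun T => V.comp (T.comp (adjoint V))) (by fun_prop) hT ?_
  rintro T ⟨⟨r, hr, hTr⟩, hTc⟩
  obtain ⟨S, hS, hgS⟩ := hg.2 r hr
  have hball (y' : Y) : (g ⁻¹' Metric.ball y' δ).Finite := hLF _ (hg.1 _ Metric.isBounded_ball)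
  have hcball (x' : X) : (Metric.closedBall x' r).Finite := hLF _ Metric.isBounded_closedBall
  exact ⟨⟨S + 2 * δ, by linarith, hasPropagationAtMost_conj hTr hV hball hcball hgS⟩,
    hasCompactEntries_conj hTr hTc hV hball hcball⟩

theorem adjoint_conjugation_star_hom_general {X Y : Type} [MetricSpace X] [MetricSpace Y]
    [DecidableEq X] [DecidableEq Y]
    (hLFX : ∀ B : Set X, Bornology.IsBounded B → B.Finite)
    {H : Type} [NormedAddCommGroup H] [InnerProductSpace ℂ H] [CompleteSpace H]
    (g : X → Y) (hg : CoarseMap g) (δ : ℝ) (hδ : 0 < δ)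
    (V : ellTwo X H →L[ℂ] ellTwo Y H)
    (hViso : (ContinuousLinearMap.adjoint V).comp V = ContinuousLinearMap.id ℂ (ellTwo X H))
    (hV : ∀ (x : X) (y : Y), δ ≤ dist (g x) y → ∀ v : H, V (lp.single 2 x v) y = 0) :
    -- `ad_g` maps the Roe algebra of `X` into the Roe algebra of `Y`
    (∀ T ∈ RoeAlgebra X H, V.comp (T.comp (ContinuousLinearMap.adjoint V)) ∈
        RoeAlgebra Y H) ∧
    -- linearity on `C*(X)`
    (∀ T S : ellTwo X H →L[ℂ] ellTwo X H, T ∈ RoeAlgebra X H → S ∈ RoeAlgebra X H →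
      V.comp ((T + S).comp (ContinuousLinearMap.adjoint V)) =
        V.comp (T.comp (ContinuousLinearMap.adjoint V)) +
          V.comp (S.comp (ContinuousLinearMap.adjoint V))) ∧
    (∀ (c : ℂ) (T : ellTwo X H →L[ℂ] ellTwo X H), T ∈ RoeAlgebra X H →
      V.comp ((c • T).comp (ContinuousLinearMap.adjoint V)) =
        c • V.comp (T.comp (ContinuousLinearMap.adjoint V))) ∧
    -- multiplicativity on `C*(X)`
    (∀ T S : ellTwo X H →L[ℂ] ellTwo X H, T ∈ RoeAlgebra X H → S ∈ RoeAlgebra X H →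
      V.comp ((T.comp S).comp (ContinuousLinearMap.adjoint V)) =
        (V.comp (T.comp (ContinuousLinearMap.adjoint V))).comp
          (V.comp (S.comp (ContinuousLinearMap.adjoint V)))) ∧
    -- compatibility with adjoints on `C*(X)`
    (∀ T : ellTwo X H →L[ℂ] ellTwo X H, T ∈ RoeAlgebra X H →
      V.comp ((ContinuousLinearMap.adjoint T).comp (ContinuousLinearMap.adjoint V)) =
        ContinuousLinearMap.adjoint (V.comp (T.comp (ContinuousLinearMap.adjoint V)))) := by
  have hVentry (x : X) (y : Y) (h : δ ≤ dist (g x) y) : matrixEntry V y x = 0 :=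
    ContinuousLinearMap.ext (hV x y h)
  refine ⟨fun T hT => conj_mem_roeAlgebra hLFX hg hδ hVentry hT, fun T S _ _ => ?_,
    fun c T _ => ?_, fun T S _ _ => ?_, fun T _ => ?_⟩
  · rw [ContinuousLinearMap.add_comp, ContinuousLinearMap.comp_add]
  · rw [ContinuousLinearMap.smul_comp, ContinuousLinearMap.comp_smul]
  · ext ξ
    simp only [ContinuousLinearMap.comp_apply]
    rw [← ContinuousLinearMap.comp_apply (adjoint V) V, hViso, ContinuousLinearMap.id_apply]
  · rw [ContinuousLinearMap.adjoint_comp, ContinuousLinearMap.adjoint_comp,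
      ContinuousLinearMap.adjoint_adjoint, ContinuousLinearMap.comp_assoc]

/-- Conjugation by a covering isometry for a coarse map `g` sends `C*(X)` into `C*(Y)`
and restricts to a `*`-homomorphism on the Roe algebra. -/
theorem adjoint_conjugation_star_hom {X Y : Type} [MetricSpace X] [MetricSpace Y]
    [DecidableEq X] [DecidableEq Y]
    (hLFX : ∀ B : Set X, Bornology.IsBounded B → B.Finite)
    (hLFY : ∀ B : Set Y, Bornology.IsBounded B → B.Finite)
    {H : Type} [NormedAddCommGroup H] [InnerProductSpace ℂ H] [CompleteSpace H]
    [TopologicalSpace.SeparableSpace H] (hinf : ¬ FiniteDimensional ℂ H)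
    (g : X → Y) (hg : CoarseMap g) (δ : ℝ) (hδ : 0 < δ)
    (V : ellTwo X H →L[ℂ] ellTwo Y H)
    (hViso : (ContinuousLinearMap.adjoint V).comp V = ContinuousLinearMap.id ℂ (ellTwo X H))
    (hV : ∀ (x : X) (y : Y), δ ≤ dist (g x) y → ∀ v : H, V (lp.single 2 x v) y = 0) :
    -- `ad_g` maps the Roe algebra of `X` into the Roe algebra of `Y`
    (∀ T ∈ RoeAlgebra X H, V.comp (T.comp (ContinuousLinearMap.adjoint V)) ∈
        RoeAlgebra Y H) ∧
    -- linearity on `C*(X)`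
    (∀ T S : ellTwo X H →L[ℂ] ellTwo X H, T ∈ RoeAlgebra X H → S ∈ RoeAlgebra X H →
      V.comp ((T + S).comp (ContinuousLinearMap.adjoint V)) =
        V.comp (T.comp (ContinuousLinearMap.adjoint V)) +
          V.comp (S.comp (ContinuousLinearMap.adjoint V))) ∧
    (∀ (c : ℂ) (T : ellTwo X H →L[ℂ] ellTwo X H), T ∈ RoeAlgebra X H →
      V.comp ((c • T).comp (ContinuousLinearMap.adjoint V)) =
        c • V.comp (T.comp (ContinuousLinearMap.adjoint V))) ∧
    -- multiplicativity on `C*(X)`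
    (∀ T S : ellTwo X H →L[ℂ] ellTwo X H, T ∈ RoeAlgebra X H → S ∈ RoeAlgebra X H →
      V.comp ((T.comp S).comp (ContinuousLinearMap.adjoint V)) =
        (V.comp (T.comp (ContinuousLinearMap.adjoint V))).comp
          (V.comp (S.comp (ContinuousLinearMap.adjoint V)))) ∧
    -- compatibility with adjoints on `C*(X)`
    (∀ T : ellTwo X H →L[ℂ] ellTwo X H, T ∈ RoeAlgebra X H →
      V.comp ((ContinuousLinearMap.adjoint T).comp (ContinuousLinearMap.adjoint V)) =
        ContinuousLinearMap.adjoint (V.comp (T.comp (ContinuousLinearMap.adjoint V)))) :=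
  adjoint_conjugation_star_hom_general hLFX g hg δ hδ V hViso hV
end Conjugation
end

section
/- Let X and Y be nonempty locally finite metric spaces that are coarsely equivalent, and let H be an infinite-dimensional separable complex Hilbert space. Then there exists a unitary operator U : ℓ²(X;H) → ℓ²(Y;H) such that the map T ↦ U∘T∘U* restricts to a *-isomorphism from the Roe algebra C*(X) onto the Roe algebra C*(Y); in particular, C*(X) and C*(Y) are *-isomorphic. -/
/-- `X` and `Y` are coarsely equivalent. -/
def CoarselyEquivalent (X Y : Type) [MetricSpace X] [MetricSpace Y] : Prop :=
  ∃ (g : X → Y) (h : Y → X) (c : ℝ), 0 < c ∧ CoarseMap g ∧ CoarseMap h ∧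
    (∀ x : X, dist (h (g x)) x ≤ c) ∧ (∀ y : Y, dist (g (h y)) y ≤ c)

/-!
A coarse equivalence `g : X → Y` yields a relation `R ⊆ X × Y` (`x R y` iff `g x` is the point of
`range g` assigned to `y` by a coarse retraction) whose sections are finite by local finiteness and
which is controlled in both directions. Choosing a countably infinite Hilbert basis `(e n)` of `H`,
the vectors `δ_x (e n)` form a Hilbert basis of `ℓ²(X;H)` indexed by `X × ι`, and as every fibre
of the retraction, times `ι`, is countably infinite on both sides, there is a bijection
`X × ι ≃ Y × ι` respecting `R`. The induced unitary `V` has its matrix supported in `R`, so each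
entry of `V T V*` is a finite sum of products of entries: finite propagation and compactness of
entries are preserved, and by continuity so is their closure.
-/

namespace ellTwo

variable {H : Type} [NormedAddCommGroup H] [InnerProductSpace ℂ H] {X Y Z : Type}

noncomputable def entry [DecidableEq X] (T : ellTwo X H →L[ℂ] ellTwo Y H) (y : Y) (x : X) :
    H →L[ℂ] H :=
  (lp.evalCLM ℂ (fun _ : Y => H) 2 y).comp
    (T.comp (lp.singleContinuousLinearMap ℂ (fun _ : X => H) 2 x))

@[simp]
theorem entry_apply [DecidableEq X] (T : ellTwo X H →L[ℂ] ellTwo Y H) (y : Y) (x : X) (v : H) :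
    entry T y x v = T (lp.single 2 x v) y :=
  rfl

variable [DecidableEq X] [DecidableEq Y]

theorem hasSum_entry_comp (S : ellTwo Y H →L[ℂ] ellTwo Z H) (T : ellTwo X H →L[ℂ] ellTwo Y H)
    (z : Z) (x : X) (v : H) :
    HasSum (fun y => entry S z y (entry T y x v)) (entry (S.comp T) z x v) :=
  ((lp.evalCLM ℂ (fun _ : Z => H) 2 z).comp S).hasSum
    (lp.hasSum_single ENNReal.ofNat_ne_top (T (lp.single 2 x v)))

theorem entry_comp_eq_sum (S : ellTwo Y H →L[ℂ] ellTwo Z H) (T : ellTwo X H →L[ℂ] ellTwo Y H)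
    {z : Z} {x : X} (s : Finset Y) (hs : ∀ y ∉ s, (entry S z y).comp (entry T y x) = 0) :
    entry (S.comp T) z x = ∑ y ∈ s, (entry S z y).comp (entry T y x) := by
  ext v
  refine (hasSum_entry_comp S T z x v).unique ?_
  rw [sum_apply]
  exact hasSum_sum_of_ne_finset_zero fun y hy => by
    rw [← ContinuousLinearMap.comp_apply, hs y hy, zero_apply]

theorem entry_conj_eq_sum {R : X → Y → Prop} (hR : ∀ y, {x | R x y}.Finite)
    {U : ellTwo X H →L[ℂ] ellTwo Y H} {W : ellTwo Y H →L[ℂ] ellTwo X H}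
    (hU : ∀ x y, ¬ R x y → entry U y x = 0) (hW : ∀ x y, ¬ R x y → entry W x y = 0)
    (T : ellTwo X H →L[ℂ] ellTwo X H) (y y' : Y) :
    entry (U.comp (T.comp W)) y y' = ∑ x ∈ (hR y).toFinset,
      (entry U y x).comp (∑ x' ∈ (hR y').toFinset, (entry T x x').comp (entry W x' y')) := by
  rw [entry_comp_eq_sum U _ (hR y).toFinset fun x hx => by
    rw [hU x y (by simpa using hx), ContinuousLinearMap.zero_comp]]
  refine Finset.sum_congr rfl fun x _ => ?_
  rw [entry_comp_eq_sum T W (hR y').toFinset fun x' hx' => by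
    rw [hW x' y' (by simpa using hx'), ContinuousLinearMap.comp_zero]]

end ellTwo

open ellTwo

section Roe

variable {H : Type} [NormedAddCommGroup H] [InnerProductSpace ℂ H]
variable {X Y : Type} [MetricSpace X] [MetricSpace Y] [DecidableEq X] [DecidableEq Y]

def AlgebraicRoeAlgebra (X : Type) [MetricSpace X] [DecidableEq X] (H : Type)
    [NormedAddCommGroup H] [InnerProductSpace ℂ H] : Set (ellTwo X H →L[ℂ] ellTwo X H) :=
  {T | (∃ r > (0 : ℝ), HasPropagationAtMost T r) ∧ HasCompactEntries T}

def IsControlled (R : X → Y → Prop) : Prop :=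
  ∀ r > (0 : ℝ), ∃ s > (0 : ℝ), ∀ x x' y y', R x y → R x' y' → dist x x' ≤ r → dist y y' ≤ s

theorem hasPropagationAtMost_iff {T : ellTwo X H →L[ℂ] ellTwo X H} {r : ℝ} :
    HasPropagationAtMost T r ↔ ∀ x y, r < dist x y → entry T x y = 0 := by
  simp only [HasPropagationAtMost, ContinuousLinearMap.ext_iff, entry_apply, zero_apply]

theorem hasCompactEntries_iff {T : ellTwo X H →L[ℂ] ellTwo X H} :
    HasCompactEntries T ↔ ∀ x y, entry T x y ∈ compactOperator (RingHom.id ℂ) H H :=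
  Iff.rfl

theorem conj_mem_algebraicRoeAlgebra {R : X → Y → Prop} (hRfin : ∀ y, {x | R x y}.Finite)
    (hR : IsControlled R) {U : ellTwo X H →L[ℂ] ellTwo Y H} {W : ellTwo Y H →L[ℂ] ellTwo X H}
    (hU : ∀ x y, ¬ R x y → entry U y x = 0) (hW : ∀ x y, ¬ R x y → entry W x y = 0)
    {T : ellTwo X H →L[ℂ] ellTwo X H} (hT : T ∈ AlgebraicRoeAlgebra X H) :
    U.comp (T.comp W) ∈ AlgebraicRoeAlgebra Y H := by
  obtain ⟨⟨r, hr, hTr⟩, hTc⟩ := hT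
  obtain ⟨s, hs, hRs⟩ := hR r hr
  rw [hasPropagationAtMost_iff] at hTr
  refine ⟨⟨s, hs, hasPropagationAtMost_iff.2 fun y y' hyy' => ?_⟩,
    hasCompactEntries_iff.2 fun y y' => ?_⟩
  · rw [entry_conj_eq_sum hRfin hU hW]
    refine Finset.sum_eq_zero fun x hx => ?_
    rw [Finset.sum_eq_zero fun x' hx' => ?_, ContinuousLinearMap.comp_zero]
    have hxx' : r < dist x x' := lt_of_not_ge fun h =>
      hyy'.not_ge (hRs x x' y y' (by simpa using hx) (by simpa using hx') h)
    rw [hTr x x' hxx', ContinuousLinearMap.zero_comp]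
  · rw [entry_conj_eq_sum hRfin hU hW]
    exact Submodule.sum_mem _ fun x _ => IsCompactOperator.clm_comp
      (Submodule.sum_mem (compactOperator (RingHom.id ℂ) H H) fun x' _ =>
        (hTc x x').comp_clm (entry W x' y')) (entry U y x)

theorem conj_mem_roeAlgebra_s8 {R : X → Y → Prop} (hRfin : ∀ y, {x | R x y}.Finite)
    (hR : IsControlled R) {U : ellTwo X H →L[ℂ] ellTwo Y H} {W : ellTwo Y H →L[ℂ] ellTwo X H}
    (hU : ∀ x y, ¬ R x y → entry U y x = 0) (hW : ∀ x y, ¬ R x y → entry W x y = 0)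
    {T : ellTwo X H →L[ℂ] ellTwo X H} (hT : T ∈ RoeAlgebra X H) :
    U.comp (T.comp W) ∈ RoeAlgebra Y H := by
  have hcont : Continuous fun T : ellTwo X H →L[ℂ] ellTwo X H => U.comp (T.comp W) := by
    fun_prop
  exact map_mem_closure (f := fun T => U.comp (T.comp W)) hcont hT fun T hT =>
    conj_mem_algebraicRoeAlgebra hRfin hR hU hW hT

end Roe

section Coarse

theorem nonempty_fiber_prod_equiv {X I : Type} (p : X → I) {i : I}
    (hc : (p ⁻¹' {i}).Countable) (hi : i ∈ Set.range p) (ι : Type) [Countable ι] [Infinite ι] :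
    Nonempty ({z : X × ι // p z.1 = i} ≃ ι) := by
  obtain ⟨x₀, hx₀⟩ := hi
  have : Countable (p ⁻¹' {i}) := hc.to_subtype
  have : Countable {z : X × ι // p z.1 = i} := by
    refine Function.Injective.countable
      (f := fun z : {z : X × ι // p z.1 = i} => ((⟨z.1.1, z.2⟩ : p ⁻¹' {i}), z.1.2)) ?_
    intro z z' h
    simp only [Prod.mk.injEq] at h
    exact Subtype.ext (Prod.ext (congrArg Subtype.val h.1) h.2)
  have : Infinite {z : X × ι // p z.1 = i} :=
    Infinite.of_injective (fun n => ⟨(x₀, n), hx₀⟩) fun n n' h => by simpa using h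
  exact nonempty_equiv_of_countable

theorem exists_equiv_prod_fiberwise {X Y I : Type} (p : X → I) (q : Y → I)
    (hpc : ∀ i, (p ⁻¹' {i}).Countable) (hqc : ∀ i, (q ⁻¹' {i}).Countable)
    (hp : Function.Surjective p) (hq : Function.Surjective q)
    (ι : Type) [Countable ι] [Infinite ι] :
    ∃ φ : X × ι ≃ Y × ι, ∀ z, q (φ z).1 = p z.1 := by
  let e (i : I) : {z : X × ι // p z.1 = i} ≃ {z : Y × ι // q z.1 = i} :=
    (nonempty_fiber_prod_equiv p (hpc i) (hp i) ι).some.trans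
      (nonempty_fiber_prod_equiv q (hqc i) (hq i) ι).some.symm
  exact ⟨Equiv.ofFiberEquiv e, Equiv.ofFiberEquiv_map e⟩

variable {X Y : Type} [MetricSpace X] [MetricSpace Y]

theorem isControlled_of_dist_le {g : X → Y} (hg : CoarseMap g) {R : X → Y → Prop} {c : ℝ}
    (hR : ∀ x y, R x y → dist (g x) y ≤ c) : IsControlled R := by
  intro r hr
  obtain ⟨S, hS, hgS⟩ := hg.2 r hr
  refine ⟨S + 2 * |c|, by positivity, fun x x' y y' hxy hxy' hxx' => ?_⟩
  linarith [dist_triangle4 y (g x) (g x') y', dist_comm y (g x), hR x y hxy, hR x' y' hxy',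
    hgS x x' hxx', le_abs_self c]

theorem CoarselyEquivalent.exists_rel_equiv
    (hLFX : ∀ B : Set X, Bornology.IsBounded B → B.Finite)
    (hLFY : ∀ B : Set Y, Bornology.IsBounded B → B.Finite) (hce : CoarselyEquivalent X Y)
    (ι : Type) [Countable ι] [Infinite ι] :
    ∃ (R : X → Y → Prop) (φ : X × ι ≃ Y × ι), (∀ y, {x | R x y}.Finite) ∧
      (∀ x, {y | R x y}.Finite) ∧ IsControlled R ∧ IsControlled (flip R) ∧
      ∀ z, R z.1 (φ z).1 := by
  classical
  obtain ⟨g, h, c, hc, hg, hh, hhg, hgh⟩ := hce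
  let p : X → Set.range g := Set.rangeFactorization g
  let q : Y → Set.range g := fun y => if hy : y ∈ Set.range g then ⟨y, hy⟩ else p (h y)
  have hq (y : Y) : dist (q y : Y) y ≤ c := by
    by_cases hy : y ∈ Set.range g
    · simp only [q, dif_pos hy, dist_self]
      exact hc.le
    · simp only [q, dif_neg hy]
      exact hgh y
  have hq_surj : Function.Surjective q := fun i => ⟨i, dif_pos i.2⟩
  have hp_fin (i : Set.range g) : (p ⁻¹' {i}).Finite :=
    hLFX _ ((hg.1 {(i : Y)} Bornology.isBounded_singleton).subset
      fun x hx => congrArg Subtype.val hx)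
  have hq_fin (i : Set.range g) : (q ⁻¹' {i}).Finite := by
    refine hLFY _ ((Metric.isBounded_closedBall (x := (i : Y)) (r := c)).subset fun y hy => ?_)
    rw [Metric.mem_closedBall, dist_comm, ← show (q y : Y) = i from congrArg Subtype.val hy]
    exact hq y
  obtain ⟨φ, hφ⟩ := exists_equiv_prod_fiberwise p q (fun i => (hp_fin i).countable)
    (fun i => (hq_fin i).countable) Set.rangeFactorization_surjective hq_surj ι
  have hRg (x : X) (y : Y) (hxy : p x = q y) : dist (g x) y ≤ c := by
    change dist (p x : Y) y ≤ c
    rw [hxy]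
    exact hq y
  obtain ⟨S, -, hhS⟩ := hh.2 c hc
  have hRh (y : Y) (x : X) (hxy : p x = q y) : dist (h y) x ≤ S + c := by
    linarith [dist_triangle (h y) (h (g x)) x, hhg x,
      hhS y (g x) (by rw [dist_comm]; exact hRg x y hxy)]
  exact ⟨fun x y => p x = q y, φ, fun y => hp_fin (q y),
    fun x => (hq_fin (p x)).subset fun _ => Eq.symm,
    isControlled_of_dist_le hg hRg, isControlled_of_dist_le hh hRh, fun z => (hφ z).symm⟩

end Coarse

section HilbertBasis

variable {𝕜 E F : Type*} [RCLike 𝕜] [NormedAddCommGroup E] [InnerProductSpace 𝕜 E]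
  [NormedAddCommGroup F] [InnerProductSpace 𝕜 F] {ι κ : Type*}

theorem HilbertBasis.one_le_dist (b : HilbertBasis ι 𝕜 E) {i j : ι} (hij : i ≠ j) :
    1 ≤ dist (b i) (b j) := by
  simpa [dist_eq_norm, inner_sub_right, b.orthonormal.inner_eq_zero hij, b.orthonormal.1 i]
    using norm_inner_le_norm (𝕜 := 𝕜) (b i) (b i - b j)

theorem HilbertBasis.countable [TopologicalSpace.SeparableSpace E] (b : HilbertBasis ι 𝕜 E) :
    Countable ι :=
  Pairwise.countable_of_isOpen_disjoint (s := fun i => Metric.ball (b i) (1 / 2))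
    (fun i j hij => Metric.ball_disjoint_ball (by linarith [b.one_le_dist hij]))
    (fun _ => Metric.isOpen_ball) fun _ => Metric.nonempty_ball.2 one_half_pos

theorem HilbertBasis.infinite (b : HilbertBasis ι 𝕜 E) (hE : ¬ FiniteDimensional 𝕜 E) :
    Infinite ι := by
  by_contra hι
  have : Fintype ι := @Fintype.ofFinite ι (not_infinite_iff_finite.1 hι)
  exact hE (Module.Finite.of_basis b.toOrthonormalBasis.toBasis)

variable [CompleteSpace E]

protected noncomputable def HilbertBasis.reindex (b : HilbertBasis ι 𝕜 E) (φ : ι ≃ κ) :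
    HilbertBasis κ 𝕜 E :=
  HilbertBasis.mk (b.orthonormal.comp _ φ.symm.injective)
    (by rw [φ.symm.surjective.range_comp, b.dense_span])

theorem HilbertBasis.reindex_apply (b : HilbertBasis ι 𝕜 E) (φ : ι ≃ κ) (k : κ) :
    b.reindex φ k = b (φ.symm k) := by
  simp [HilbertBasis.reindex]

protected noncomputable def HilbertBasis.equiv (b : HilbertBasis ι 𝕜 E) (b' : HilbertBasis κ 𝕜 F)
    (φ : ι ≃ κ) : E ≃ₗᵢ[𝕜] F :=
  (b.reindex φ).repr.trans b'.repr.symm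

theorem HilbertBasis.equiv_apply (b : HilbertBasis ι 𝕜 E) (b' : HilbertBasis κ 𝕜 F)
    (φ : ι ≃ κ) (i : ι) : b.equiv b' φ (b i) = b' (φ i) := by
  classical
  rw [HilbertBasis.equiv, LinearIsometryEquiv.trans_apply, ← φ.symm_apply_apply i,
    ← b.reindex_apply φ, HilbertBasis.repr_self, HilbertBasis.repr_symm_single, φ.apply_symm_apply]

theorem HilbertBasis.equiv_symm_apply (b : HilbertBasis ι 𝕜 E) (b' : HilbertBasis κ 𝕜 F)
    (φ : ι ≃ κ) (k : κ) : (b.equiv b' φ).symm (b' k) = b (φ.symm k) := by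
  rw [LinearIsometryEquiv.symm_apply_eq, equiv_apply, φ.apply_symm_apply]

end HilbertBasis

section Unitary

open ellTwo

variable {H : Type} [NormedAddCommGroup H] [InnerProductSpace ℂ H] {ι : Type}
  {X Y : Type} [DecidableEq X] [DecidableEq Y]

theorem entry_eq_zero_of_map_single (e : HilbertBasis ι ℂ H) (V : ellTwo X H →L[ℂ] ellTwo Y H)
    (φ : X × ι ≃ Y × ι) (hV : ∀ z, V (lp.single 2 z.1 (e z.2)) = lp.single 2 (φ z).1 (e (φ z).2))
    {x : X} {y : Y} (hxy : ∀ n, (φ (x, n)).1 ≠ y) : entry V y x = 0 := by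
  refine ContinuousLinearMap.ext_on
    (Submodule.dense_iff_topologicalClosure_eq_top.2 e.dense_span) ?_
  rintro _ ⟨n, rfl⟩
  rw [entry_apply, hV (x, n), lp.single_apply_ne _ _ _ (hxy n).symm, zero_apply]

variable [CompleteSpace H]

noncomputable def lpSingleHilbertBasis (X : Type) [DecidableEq X] (e : HilbertBasis ι ℂ H) :
    HilbertBasis (X × ι) ℂ (ellTwo X H) :=
  HilbertBasis.mkOfOrthogonalEqBot (v := fun z => lp.single 2 z.1 (e z.2))
    (by
      classical
      rw [orthonormal_iff_ite]
      rintro ⟨x, n⟩ ⟨x', m⟩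
      by_cases hx : x = x'
      · subst hx
        simp [lp.inner_single_left, orthonormal_iff_ite.1 e.orthonormal n m]
      · simp [lp.inner_single_left, hx])
    (by
      refine (Submodule.eq_bot_iff _).2 fun f hf => lp.ext (funext fun x => ?_)
      refine e.repr.map_eq_zero_iff.1 (lp.ext (funext fun n => ?_))
      rw [HilbertBasis.repr_apply_apply, lp.coeFn_zero, Pi.zero_apply]
      simpa [lp.inner_single_left] using Submodule.inner_right_of_mem_orthogonal
        (Submodule.subset_span (Set.mem_range_self (x, n))) hf)

theorem lpSingleHilbertBasis_apply (e : HilbertBasis ι ℂ H) (z : X × ι) :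
    lpSingleHilbertBasis X e z = lp.single 2 z.1 (e z.2) := by
  simp [lpSingleHilbertBasis]

theorem exists_linearIsometryEquiv_entry_eq_zero (e : HilbertBasis ι ℂ H) {R : X → Y → Prop}
    (φ : X × ι ≃ Y × ι) (hφ : ∀ z, R z.1 (φ z).1) :
    ∃ V : ellTwo X H ≃ₗᵢ[ℂ] ellTwo Y H,
      (∀ x y, ¬ R x y → entry (V : ellTwo X H →L[ℂ] ellTwo Y H) y x = 0) ∧
      (∀ x y, ¬ R x y → entry (V.symm : ellTwo Y H →L[ℂ] ellTwo X H) x y = 0) := by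
  let V := (lpSingleHilbertBasis X e).equiv (lpSingleHilbertBasis Y e) φ
  refine ⟨V, fun x y hxy => ?_, fun x y hxy => ?_⟩
  · refine entry_eq_zero_of_map_single e _ φ (fun z => ?_) fun n h => hxy (h ▸ hφ (x, n))
    simp only [← lpSingleHilbertBasis_apply]
    exact HilbertBasis.equiv_apply _ _ φ z
  · refine entry_eq_zero_of_map_single e _ φ.symm (fun z => ?_) fun n h => hxy ?_
    · simp only [← lpSingleHilbertBasis_apply]
      exact HilbertBasis.equiv_symm_apply _ _ φ z
    · simpa [h] using hφ (φ.symm (y, n))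

end Unitary

theorem roeAlgebra_iso_of_coarselyEquivalent_general
    (X Y : Type) [MetricSpace X] [MetricSpace Y] [DecidableEq X] [DecidableEq Y]
    (hLFX : ∀ B : Set X, Bornology.IsBounded B → B.Finite)
    (hLFY : ∀ B : Set Y, Bornology.IsBounded B → B.Finite)
    (hce : CoarselyEquivalent X Y)
    (H : Type) [NormedAddCommGroup H] [InnerProductSpace ℂ H] [CompleteSpace H]
    [TopologicalSpace.SeparableSpace H] (hinf : ¬ FiniteDimensional ℂ H) :
    ∃ U : ellTwo X H →L[ℂ] ellTwo Y H,
      -- `U` is a unitary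
      (ContinuousLinearMap.adjoint U).comp U = ContinuousLinearMap.id ℂ (ellTwo X H) ∧
      U.comp (ContinuousLinearMap.adjoint U) = ContinuousLinearMap.id ℂ (ellTwo Y H) ∧
      -- conjugation by `U` maps `C*(X)` into `C*(Y)` ...
      (∀ T ∈ RoeAlgebra X H,
        U.comp (T.comp (ContinuousLinearMap.adjoint U)) ∈ RoeAlgebra Y H) ∧
      -- ... surjectively,
      (∀ S ∈ RoeAlgebra Y H, ∃ T ∈ RoeAlgebra X H,
        U.comp (T.comp (ContinuousLinearMap.adjoint U)) = S) ∧
      -- and is a `*`-homomorphism on `C*(X)`: additive, ℂ-linear, multiplicative,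
      -- star-preserving (all automatic from unitarity, stated on `C*(X)`).
      (∀ T S : ellTwo X H →L[ℂ] ellTwo X H, T ∈ RoeAlgebra X H → S ∈ RoeAlgebra X H →
        U.comp ((T + S).comp (ContinuousLinearMap.adjoint U)) =
          U.comp (T.comp (ContinuousLinearMap.adjoint U)) +
            U.comp (S.comp (ContinuousLinearMap.adjoint U))) ∧
      (∀ (c : ℂ) (T : ellTwo X H →L[ℂ] ellTwo X H), T ∈ RoeAlgebra X H →
        U.comp ((c • T).comp (ContinuousLinearMap.adjoint U)) =
          c • U.comp (T.comp (ContinuousLinearMap.adjoint U))) ∧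
      (∀ T S : ellTwo X H →L[ℂ] ellTwo X H, T ∈ RoeAlgebra X H → S ∈ RoeAlgebra X H →
        U.comp ((T.comp S).comp (ContinuousLinearMap.adjoint U)) =
          (U.comp (T.comp (ContinuousLinearMap.adjoint U))).comp
            (U.comp (S.comp (ContinuousLinearMap.adjoint U)))) ∧
      (∀ T : ellTwo X H →L[ℂ] ellTwo X H, T ∈ RoeAlgebra X H →
        U.comp ((ContinuousLinearMap.adjoint T).comp (ContinuousLinearMap.adjoint U)) =
          ContinuousLinearMap.adjoint
            (U.comp (T.comp (ContinuousLinearMap.adjoint U)))) := by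
  obtain ⟨w, e, -⟩ := exists_hilbertBasis ℂ H
  have := e.countable
  have := e.infinite hinf
  obtain ⟨R, φ, hRX, hRY, hR, hR', hφ⟩ := hce.exists_rel_equiv hLFX hLFY w
  obtain ⟨V, hU, hW⟩ := exists_linearIsometryEquiv_entry_eq_zero e φ hφ
  refine ⟨V, ?_, ?_, fun T hT => ?_, fun S hS => ⟨_, conj_mem_roeAlgebra_s8 (R := flip R) hRY hR'
    (fun y x => hW x y) (fun y x => hU x y) hS, ?_⟩, fun T S _ _ => ?_, fun c T _ => ?_,
    fun T S _ _ => ?_, fun T _ => ?_⟩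
  · ext; simp
  · ext; simp
  · simpa only [LinearIsometryEquiv.adjoint_eq_symm] using conj_mem_roeAlgebra_s8 hRX hR hU hW hT
  · ext; simp
  · rw [ContinuousLinearMap.add_comp, ContinuousLinearMap.comp_add]
  · rw [ContinuousLinearMap.smul_comp, ContinuousLinearMap.comp_smul]
  · ext; simp
  · rw [ContinuousLinearMap.adjoint_comp, ContinuousLinearMap.adjoint_comp,
      ContinuousLinearMap.adjoint_adjoint, ContinuousLinearMap.comp_assoc]

/-- If `X` and `Y` are coarsely equivalent nonempty locally finite metric spaces, then
their Roe algebras are `*`-isomorphic via conjugation by a unitary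
`U : ℓ²(X;H) → ℓ²(Y;H)`. -/
theorem roeAlgebra_iso_of_coarselyEquivalent
    (X Y : Type) [MetricSpace X] [MetricSpace Y] [DecidableEq X] [DecidableEq Y]
    [Nonempty X] [Nonempty Y]
    (hLFX : ∀ B : Set X, Bornology.IsBounded B → B.Finite)
    (hLFY : ∀ B : Set Y, Bornology.IsBounded B → B.Finite)
    (hce : CoarselyEquivalent X Y)
    (H : Type) [NormedAddCommGroup H] [InnerProductSpace ℂ H] [CompleteSpace H]
    [TopologicalSpace.SeparableSpace H] (hinf : ¬ FiniteDimensional ℂ H) :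
    ∃ U : ellTwo X H →L[ℂ] ellTwo Y H,
      -- `U` is a unitary
      (ContinuousLinearMap.adjoint U).comp U = ContinuousLinearMap.id ℂ (ellTwo X H) ∧
      U.comp (ContinuousLinearMap.adjoint U) = ContinuousLinearMap.id ℂ (ellTwo Y H) ∧
      -- conjugation by `U` maps `C*(X)` into `C*(Y)` ...
      (∀ T ∈ RoeAlgebra X H,
        U.comp (T.comp (ContinuousLinearMap.adjoint U)) ∈ RoeAlgebra Y H) ∧
      -- ... surjectively,
      (∀ S ∈ RoeAlgebra Y H, ∃ T ∈ RoeAlgebra X H,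
        U.comp (T.comp (ContinuousLinearMap.adjoint U)) = S) ∧
      -- and is a `*`-homomorphism on `C*(X)`: additive, ℂ-linear, multiplicative,
      -- star-preserving (all automatic from unitarity, stated on `C*(X)`).
      (∀ T S : ellTwo X H →L[ℂ] ellTwo X H, T ∈ RoeAlgebra X H → S ∈ RoeAlgebra X H →
        U.comp ((T + S).comp (ContinuousLinearMap.adjoint U)) =
          U.comp (T.comp (ContinuousLinearMap.adjoint U)) +
            U.comp (S.comp (ContinuousLinearMap.adjoint U))) ∧
      (∀ (c : ℂ) (T : ellTwo X H →L[ℂ] ellTwo X H), T ∈ RoeAlgebra X H →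
        U.comp ((c • T).comp (ContinuousLinearMap.adjoint U)) =
          c • U.comp (T.comp (ContinuousLinearMap.adjoint U))) ∧
      (∀ T S : ellTwo X H →L[ℂ] ellTwo X H, T ∈ RoeAlgebra X H → S ∈ RoeAlgebra X H →
        U.comp ((T.comp S).comp (ContinuousLinearMap.adjoint U)) =
          (U.comp (T.comp (ContinuousLinearMap.adjoint U))).comp
            (U.comp (S.comp (ContinuousLinearMap.adjoint U)))) ∧
      (∀ T : ellTwo X H →L[ℂ] ellTwo X H, T ∈ RoeAlgebra X H →
        U.comp ((ContinuousLinearMap.adjoint T).comp (ContinuousLinearMap.adjoint U)) =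
          ContinuousLinearMap.adjoint
            (U.comp (T.comp (ContinuousLinearMap.adjoint U)))) :=
  roeAlgebra_iso_of_coarselyEquivalent_general X Y hLFX hLFY hce H hinf
end
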